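/- arXiv:1306.5044 — 3 statements merged into one kernel-verified Lean document; each statement's English description precedes it below -/
import Mathlib

section
/- Let N ≥ 2, let ℒ be the Laplacian of an undirected 0–1-weighted graph on N nodes, let φ be an N×(N−1) matrix with φφᵀ = I_N − J_N and φᵀφ = I_{N−1}, and let B_{ij} be as above with a_{ij} symmetric 0–1 adjacency entries. Then ∑_{i,j=1}^N (φᵀ B_{ij}ᵀ φ)(φᵀ B_{ij} φ) = (2(N−1)/N) · φᵀ ℒ φ. -/
open Matrix

/-- For a 0–1 symmetric adjacency `a` with zero diagonal, Laplacian
`ℒ = D − A`, edge matrices `B_{ij}` and `φ` with `φφᵀ = I − J_N`, `φᵀφ = I`,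
one has `∑_{i,j} (φᵀ B_{ij}ᵀ φ)(φᵀ B_{ij} φ) = (2(N−1)/N)·φᵀℒφ`. -/
theorem stmt_4 (N : ℕ) (hN : 2 ≤ N) (a : Fin N → Fin N → ℝ)
    (ha01 : ∀ i j, a i j = 0 ∨ a i j = 1)
    (hsymm : ∀ i j, a i j = a j i)
    (hdiag : ∀ i, a i i = 0)
    (B : Fin N → Fin N → Matrix (Fin N) (Fin N) ℝ)
    (hB : ∀ i j, B i j = Matrix.single i i (-(a i j)) + Matrix.single i j (a i j))
    (L : Matrix (Fin N) (Fin N) ℝ)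
    (hL : L = Matrix.diagonal (fun i => ∑ j, a i j) - Matrix.of a)
    (φ : Matrix (Fin N) (Fin (N - 1)) ℝ)
    (hφ1 : φ * φᵀ = 1 - (N : ℝ)⁻¹ • Matrix.of (fun _ _ : Fin N => (1 : ℝ)))
    (hφ2 : φᵀ * φ = 1) :
    ∑ i, ∑ j, (φᵀ * (B i j)ᵀ * φ) * (φᵀ * (B i j) * φ) =
      (2 * ((N : ℝ) - 1) / N) • (φᵀ * L * φ) := by
  have hN0 : (N : ℝ) ≠ 0 := Nat.cast_ne_zero.mpr (by omega)
  have hsq : ∀ i j, a i j * a i j = a i j := fun i j => by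
    rcases ha01 i j with h | h <;> simp [h]
  have hBe : ∀ i j k l, B i j k l =
      a i j * ((if i = k then (1:ℝ) else 0) *
        ((if j = l then 1 else 0) - (if i = l then 1 else 0))) := by
    intro i j k l
    rw [hB]
    simp [Matrix.single, Matrix.add_apply]
    split_ifs <;> simp_all
  have hJ : ∀ i j, (B i j)ᵀ * (Matrix.of fun _ _ : Fin N => (1:ℝ)) * (B i j) =
      (B i j)ᵀ * (B i j) := by
    intro i j
    ext k l
    simp [Matrix.mul_apply, hBe, mul_ite, ite_mul, Finset.mul_sum, Finset.sum_mul,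
      Finset.sum_ite_eq]
  have hmid : ∀ i j, (B i j)ᵀ * (φ * φᵀ) * (B i j) =
      (1 - (N : ℝ)⁻¹) • ((B i j)ᵀ * (B i j)) := by
    intro i j
    rw [hφ1, Matrix.mul_sub, Matrix.sub_mul, Matrix.mul_one, sub_smul, one_smul]
    congr 1
    rw [Matrix.mul_smul, Matrix.smul_mul, hJ]
  have hsum : ∑ i, ∑ j, (B i j)ᵀ * (B i j) = (2:ℝ) • L := by
    ext k l
    simp only [Matrix.sum_apply, Matrix.smul_apply, Matrix.mul_apply, Matrix.transpose_apply,
      hBe, hL, Matrix.sub_apply, Matrix.diagonal_apply, Matrix.of_apply, smul_eq_mul]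
    have hin : ∀ i j : Fin N,
        ∑ m, (a i j * ((if i = m then (1:ℝ) else 0) *
            ((if j = k then 1 else 0) - (if i = k then 1 else 0)))) *
          (a i j * ((if i = m then (1:ℝ) else 0) *
            ((if j = l then 1 else 0) - (if i = l then 1 else 0)))) =
        a i j * (((if j = k then (1:ℝ) else 0) - (if i = k then 1 else 0)) *
          ((if j = l then 1 else 0) - (if i = l then 1 else 0))) := by
      intro i j
      simp [mul_ite, ite_mul, Finset.sum_ite_eq]
      split_ifs <;> ring_nf <;> simp [pow_two, hsq]
    simp only [hin]
    simp only [mul_sub, sub_mul, mul_ite, ite_mul, mul_one, mul_zero, one_mul, zero_mul,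
      Finset.sum_sub_distrib, Finset.sum_ite_eq, Finset.sum_ite_eq', Finset.mem_univ, if_true]
    rw [Finset.sum_comm]
    simp only [Finset.sum_ite_eq', Finset.mem_univ, if_true, Finset.sum_sub_distrib]
    by_cases hkl : k = l
    · subst hkl
      simp only [if_true]
      have h1 : ∑ x : Fin N, a x k = ∑ j : Fin N, a k j :=
        Finset.sum_congr rfl fun x _ => hsymm x k
      rw [h1]
      ring_nf
    · have hlk : ¬ l = k := fun h => hkl h.symm
      simp only [hkl, hlk, if_false, Finset.sum_const_zero]
      rw [hsymm l k]
      ring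
  calc ∑ i, ∑ j, (φᵀ * (B i j)ᵀ * φ) * (φᵀ * (B i j) * φ)
      = ∑ i, ∑ j, φᵀ * ((B i j)ᵀ * (φ * φᵀ) * (B i j)) * φ := by
        refine Finset.sum_congr rfl fun i _ => Finset.sum_congr rfl fun j _ => ?_
        simp only [Matrix.mul_assoc]
    _ = φᵀ * (∑ i, ∑ j, (B i j)ᵀ * (φ * φᵀ) * (B i j)) * φ := by
        simp only [Matrix.mul_sum, Matrix.sum_mul]
    _ = φᵀ * ((1 - (N : ℝ)⁻¹) • ((2:ℝ) • L)) * φ := by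
        simp only [hmid, ← Finset.smul_sum, hsum]
    _ = (2 * ((N : ℝ) - 1) / N) • (φᵀ * L * φ) := by
        rw [smul_smul, Matrix.mul_smul, Matrix.smul_mul]
        congr 1
        field_simp
end

section
/- Let σ₁₂, σ₂₁ > 0 and k ∈ ℝ. Then 4k − k²(σ₁₂² + σ₂₁²) > 0 implies 2k + (k²/2)(σ₁₂² + σ₂₁²) > 0, and the converse fails: there exists k with 2k + (k²/2)(σ₁₂² + σ₂₁²) > 0 but 4k − k²(σ₁₂² + σ₂₁²) ≤ 0. -/
/-- For `σ₁₂, σ₂₁ > 0`, `4k − k²(σ₁₂²+σ₂₁²) > 0` implies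
`2k + (k²/2)(σ₁₂²+σ₂₁²) > 0`, and the converse fails. -/
theorem stmt_9 (σ₁₂ σ₂₁ : ℝ) (h₁ : 0 < σ₁₂) (h₂ : 0 < σ₂₁) :
    (∀ k : ℝ, 4 * k - k ^ 2 * (σ₁₂ ^ 2 + σ₂₁ ^ 2) > 0 →
      2 * k + k ^ 2 / 2 * (σ₁₂ ^ 2 + σ₂₁ ^ 2) > 0) ∧
    (∃ k : ℝ, 2 * k + k ^ 2 / 2 * (σ₁₂ ^ 2 + σ₂₁ ^ 2) > 0 ∧
      4 * k - k ^ 2 * (σ₁₂ ^ 2 + σ₂₁ ^ 2) ≤ 0) := by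
  have hs : 0 < σ₁₂ ^ 2 + σ₂₁ ^ 2 := by positivity
  constructor
  · intro k hk
    have hk0 : 0 < k := by nlinarith [sq_nonneg k]
    nlinarith [sq_nonneg k]
  · refine ⟨4 / (σ₁₂ ^ 2 + σ₂₁ ^ 2), ?_, ?_⟩
    · have : (0:ℝ) < 4 / (σ₁₂ ^ 2 + σ₂₁ ^ 2) := by positivity
      nlinarith [sq_nonneg (4 / (σ₁₂ ^ 2 + σ₂₁ ^ 2))]
    · rw [div_pow]
      field_simp
      ring_nf
      exact le_rfl
end

section
/- Let σ_{ji} > 0 for all edges, k ∈ ℝ, N ≥ 2, and let σ̲ = min σ_{ji}, σ̄ = max σ_{ji}. Define for the homogeneous control gain K = kI_n the matrix Ψ_K = Λ⁰⊗(2k I_n) − Φ_K where Φ_K = ∑_{i,j}(φᵀB_{ij}ᵀφφᵀB_{ij}φ)⊗(k²σ_{ji}² I_n). Then Ψ_K ≤ 2k(1 − kσ̲²(N−1)/N)(Λ⁰ ⊗ I_n) as quadratic forms when k > 0, and hence positive definiteness of Ψ_K implies 0 < k < N/((N−1)σ̲²). -/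
open Matrix Kronecker

lemma stmt15_stdB_transpose {N : ℕ} (i j : Fin N) (c : ℝ) :
    (Matrix.single i j c)ᵀ = Matrix.single j i c := by
  ext r s; simp [Matrix.single, and_comm]

lemma stmt15_std_mul_ones_mul {N : ℕ} (p q i j : Fin N) (c d : ℝ) :
    Matrix.single p q c * Matrix.of (fun _ _ : Fin N => (1:ℝ)) *
      Matrix.single i j d = Matrix.single p j (c * d) := by
  ext r s
  simp [Matrix.mul_apply, Matrix.single, ite_and, Finset.mul_sum, Finset.sum_mul]
  split_ifs <;> rfl

lemma stmt15_per_term {N : ℕ} (i j : Fin N) (c : ℝ) (hc : c * c = c) :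
    (Matrix.single i i (-c) + Matrix.single i j c)ᵀ *
      ((1 : Matrix (Fin N) (Fin N) ℝ) - (N:ℝ)⁻¹ • Matrix.of (fun _ _ : Fin N => (1:ℝ))) *
      (Matrix.single i i (-c) + Matrix.single i j c)
    = (1 - (N:ℝ)⁻¹) • (Matrix.single i i c - Matrix.single i j c
        - Matrix.single j i c + Matrix.single j j c) := by
  rw [Matrix.transpose_add, stmt15_stdB_transpose, stmt15_stdB_transpose]
  simp only [Matrix.mul_sub, Matrix.sub_mul, Matrix.mul_add, Matrix.add_mul, Matrix.mul_one,
    Matrix.mul_smul, Matrix.smul_mul, stmt15_std_mul_ones_mul, Matrix.single_mul_single_same,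
    neg_mul, mul_neg, neg_neg, hc]
  ext r s
  simp only [Matrix.add_apply, Matrix.sub_apply, Matrix.smul_apply, Matrix.single,
    Matrix.of_apply, smul_eq_mul]
  split_ifs <;> ring

lemma stmt15_ite_sum {ι : Type*} [Fintype ι] (c : Prop) [Decidable c] (f : ι → ℝ) :
    ∑ y, (if c then f y else 0) = if c then ∑ y, f y else 0 := by
  split_ifs <;> simp

lemma stmt15_L_decomp {N : ℕ} (a : Fin N → Fin N → ℝ)
    (hsymm : ∀ i j, a i j = a j i)
    (L : Matrix (Fin N) (Fin N) ℝ)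
    (hL : L = Matrix.diagonal (fun i => ∑ j, a i j) - Matrix.of a) :
    ∑ i, ∑ j, (Matrix.single i i (a i j) - Matrix.single i j (a i j)
      - Matrix.single j i (a i j) + Matrix.single j j (a i j))
    = (2:ℝ) • L := by
  ext p q
  simp only [Matrix.sum_apply, Matrix.add_apply, Matrix.sub_apply, Matrix.single,
    Matrix.of_apply, hL, Matrix.smul_apply, Matrix.diagonal_apply, smul_eq_mul, ite_and]
  simp only [Finset.sum_sub_distrib, Finset.sum_add_distrib, stmt15_ite_sum,
    Finset.sum_ite_eq', Finset.mem_univ, if_true]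
  have h1 : ∑ x : Fin N, a x p = ∑ x : Fin N, a p x :=
    Finset.sum_congr rfl fun x _ => (hsymm x p)
  rw [hsymm q p]
  split_ifs with h
  · subst h; rw [h1]; ring
  · ring

lemma stmt15_sum_T {N : ℕ} (a : Fin N → Fin N → ℝ)
    (ha01 : ∀ i j, a i j = 0 ∨ a i j = 1)
    (hsymm : ∀ i j, a i j = a j i)
    (B : Fin N → Fin N → Matrix (Fin N) (Fin N) ℝ)
    (hB : ∀ i j, B i j = Matrix.single i i (-(a i j)) + Matrix.single i j (a i j))
    (L : Matrix (Fin N) (Fin N) ℝ)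
    (hL : L = Matrix.diagonal (fun i => ∑ j, a i j) - Matrix.of a)
    (φ : Matrix (Fin N) (Fin (N - 1)) ℝ)
    (hφ1 : φ * φᵀ = 1 - (N : ℝ)⁻¹ • Matrix.of (fun _ _ : Fin N => (1 : ℝ)))
    (lam : Fin (N - 1) → ℝ)
    (hLφ : φᵀ * L * φ = Matrix.diagonal lam) :
    ∑ i, ∑ j, φᵀ * (B i j)ᵀ * φ * (φᵀ * B i j * φ)
      = (2 * (1 - (N:ℝ)⁻¹)) • Matrix.diagonal lam := by
  have key : ∀ i j : Fin N, φᵀ * (B i j)ᵀ * φ * (φᵀ * B i j * φ)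
      = φᵀ * ((B i j)ᵀ * (φ * φᵀ) * B i j) * φ := by
    intro i j; simp only [Matrix.mul_assoc]
  have inner : ∑ i, ∑ j, (B i j)ᵀ * (φ * φᵀ) * B i j = (2 * (1 - (N:ℝ)⁻¹)) • L := by
    have hterm : ∀ i j : Fin N, (B i j)ᵀ * (φ * φᵀ) * B i j
        = (1 - (N:ℝ)⁻¹) • (Matrix.single i i (a i j) - Matrix.single i j (a i j)
            - Matrix.single j i (a i j) + Matrix.single j j (a i j)) := by
      intro i j
      have hc : a i j * a i j = a i j := by rcases ha01 i j with h | h <;> rw [h] <;> ring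
      rw [hB, hφ1]
      exact stmt15_per_term i j (a i j) hc
    calc ∑ i, ∑ j, (B i j)ᵀ * (φ * φᵀ) * B i j
        = (1 - (N:ℝ)⁻¹) • ∑ i, ∑ j, (Matrix.single i i (a i j)
            - Matrix.single i j (a i j) - Matrix.single j i (a i j)
            + Matrix.single j j (a i j)) := by
          simp only [hterm, Finset.smul_sum]
      _ = (1 - (N:ℝ)⁻¹) • ((2:ℝ) • L) := by rw [stmt15_L_decomp a hsymm L hL]
      _ = (2 * (1 - (N:ℝ)⁻¹)) • L := by rw [smul_smul]; ring_nf
  calc ∑ i, ∑ j, φᵀ * (B i j)ᵀ * φ * (φᵀ * B i j * φ)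
      = ∑ i, ∑ j, φᵀ * ((B i j)ᵀ * (φ * φᵀ) * B i j) * φ := by simp only [key]
    _ = φᵀ * (∑ i, ∑ j, (B i j)ᵀ * (φ * φᵀ) * B i j) * φ := by
        simp only [Matrix.mul_sum, Matrix.sum_mul]
    _ = φᵀ * ((2 * (1 - (N:ℝ)⁻¹)) • L) * φ := by rw [inner]
    _ = (2 * (1 - (N:ℝ)⁻¹)) • (φᵀ * L * φ) := by
        rw [Matrix.mul_smul, Matrix.smul_mul]
    _ = (2 * (1 - (N:ℝ)⁻¹)) • Matrix.diagonal lam := by rw [hLφ]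

lemma stmt15_qf_sum {ι m' : Type*} [Fintype m'] (s : Finset ι)
    (A : ι → Matrix m' m' ℝ) (x : m' → ℝ) :
    x ⬝ᵥ (∑ i ∈ s, A i) *ᵥ x = ∑ i ∈ s, x ⬝ᵥ (A i) *ᵥ x := by
  classical
  induction s using Finset.induction with
  | empty => simp
  | insert _ _ h ih =>
      rw [Finset.sum_insert h, Finset.sum_insert h, Matrix.add_mulVec, dotProduct_add, ih]

lemma stmt15_qf_smul {m' : Type*} [Fintype m'] (c : ℝ) (A : Matrix m' m' ℝ) (x : m' → ℝ) :
    x ⬝ᵥ (c • A) *ᵥ x = c * (x ⬝ᵥ A *ᵥ x) := by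
  rw [Matrix.smul_mulVec, dotProduct_smul]; rfl

lemma stmt15_qf_nonneg {m' p' : Type*} [Fintype m'] [Fintype p'] (A : Matrix m' p' ℝ)
    (x : p' → ℝ) : 0 ≤ x ⬝ᵥ (Aᵀ * A) *ᵥ x := by
  rw [← Matrix.mulVec_mulVec, Matrix.dotProduct_mulVec, Matrix.vecMul_transpose]
  exact Finset.sum_nonneg fun i _ => mul_self_nonneg _

lemma stmt15_sum_kronecker {ι p' q' : Type*} [Fintype p'] [Fintype q'] (s : Finset ι)
    (f : ι → Matrix p' p' ℝ) (C : Matrix q' q' ℝ) :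
    (∑ i ∈ s, f i) ⊗ₖ C = ∑ i ∈ s, (f i ⊗ₖ C) := by
  ext ⟨r₁, r₂⟩ ⟨s₁, s₂⟩
  simp [Matrix.kroneckerMap_apply, Matrix.sum_apply, Finset.sum_mul]

lemma stmt15_T_kron_nonneg {p' q' n : ℕ} (M : Matrix (Fin p') (Fin q') ℝ)
    (x : Fin q' × Fin n → ℝ) :
    0 ≤ x ⬝ᵥ ((Mᵀ * M) ⊗ₖ (1 : Matrix (Fin n) (Fin n) ℝ)) *ᵥ x := by
  have hk : (Mᵀ * M) ⊗ₖ (1 : Matrix (Fin n) (Fin n) ℝ)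
      = (M ⊗ₖ (1 : Matrix (Fin n) (Fin n) ℝ))ᵀ * (M ⊗ₖ (1 : Matrix (Fin n) (Fin n) ℝ)) := by
    calc (Mᵀ * M) ⊗ₖ (1 : Matrix (Fin n) (Fin n) ℝ)
        = (Mᵀ * M) ⊗ₖ ((1 : Matrix (Fin n) (Fin n) ℝ) * 1) := by rw [Matrix.one_mul]
      _ = (Mᵀ ⊗ₖ (1 : Matrix (Fin n) (Fin n) ℝ)) * (M ⊗ₖ (1 : Matrix (Fin n) (Fin n) ℝ)) :=
          Matrix.mul_kronecker_mul _ _ _ _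
      _ = (Mᵀ ⊗ₖ (1 : Matrix (Fin n) (Fin n) ℝ)ᵀ) * (M ⊗ₖ (1 : Matrix (Fin n) (Fin n) ℝ)) := by
          rw [Matrix.transpose_one]
      _ = (M ⊗ₖ (1 : Matrix (Fin n) (Fin n) ℝ))ᵀ * (M ⊗ₖ (1 : Matrix (Fin n) (Fin n) ℝ)) := by
          rw [Matrix.kroneckerMap_transpose]
  rw [hk]
  exact stmt15_qf_nonneg _ _

/-- With `K = kI_n`, `Φ_K = ∑_{i,j}(φᵀB_{ij}ᵀφφᵀB_{ij}φ)⊗(k²σ_{ji}²I_n)`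
and `Ψ_K = Λ⁰⊗(2kI_n) − Φ_K`, if `k > 0` then `Ψ_K ≤ 2k(1 − kσ̲²(N−1)/N)(Λ⁰⊗I_n)`
as quadratic forms, and positive definiteness of `Ψ_K` implies
`0 < k < N/((N−1)σ̲²)`. -/
theorem stmt_15 (N n : ℕ) (hN : 2 ≤ N) (hn : 1 ≤ n)
    (a : Fin N → Fin N → ℝ)
    (ha01 : ∀ i j, a i j = 0 ∨ a i j = 1)
    (hsymm : ∀ i j, a i j = a j i)
    (hdiag : ∀ i, a i i = 0)
    (B : Fin N → Fin N → Matrix (Fin N) (Fin N) ℝ)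
    (hB : ∀ i j, B i j = Matrix.single i i (-(a i j)) + Matrix.single i j (a i j))
    (L : Matrix (Fin N) (Fin N) ℝ)
    (hL : L = Matrix.diagonal (fun i => ∑ j, a i j) - Matrix.of a)
    (φ : Matrix (Fin N) (Fin (N - 1)) ℝ)
    (hφ1 : φ * φᵀ = 1 - (N : ℝ)⁻¹ • Matrix.of (fun _ _ : Fin N => (1 : ℝ)))
    (hφ2 : φᵀ * φ = 1)
    (lam : Fin (N - 1) → ℝ) (hpos : ∀ i, 0 < lam i)
    (hLφ : φᵀ * L * φ = Matrix.diagonal lam)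
    (σ : Fin N → Fin N → ℝ) (hσpos : ∀ i j, a i j = 1 → 0 < σ j i)
    (σlow : ℝ)
    (hlow : (∀ i j, a i j = 1 → σlow ≤ σ j i) ∧ ∃ i j, a i j = 1 ∧ σ j i = σlow)
    (k : ℝ)
    (Φ : Matrix (Fin (N - 1) × Fin n) (Fin (N - 1) × Fin n) ℝ)
    (hΦ : Φ = ∑ i, ∑ j, (φᵀ * (B i j)ᵀ * φ * (φᵀ * (B i j) * φ)) ⊗ₖ
        ((k ^ 2 * σ j i ^ 2) • (1 : Matrix (Fin n) (Fin n) ℝ)))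
    (Ψ : Matrix (Fin (N - 1) × Fin n) (Fin (N - 1) × Fin n) ℝ)
    (hΨ : Ψ = Matrix.diagonal lam ⊗ₖ ((2 * k) • (1 : Matrix (Fin n) (Fin n) ℝ)) - Φ) :
    (0 < k → ∀ x : Fin (N - 1) × Fin n → ℝ,
      x ⬝ᵥ Ψ *ᵥ x ≤ (2 * k * (1 - k * σlow ^ 2 * ((N : ℝ) - 1) / N)) *
        (x ⬝ᵥ (Matrix.diagonal lam ⊗ₖ (1 : Matrix (Fin n) (Fin n) ℝ)) *ᵥ x)) ∧
    (Ψ.PosDef → 0 < k ∧ k < (N : ℝ) / (((N : ℝ) - 1) * σlow ^ 2)) := by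
  have hNval : (2:ℝ) ≤ (N:ℝ) := by exact_mod_cast hN
  have hNR : (0:ℝ) < N := by linarith
  have hNne : (N:ℝ) ≠ 0 := ne_of_gt hNR
  have hN1 : (0:ℝ) < (N:ℝ) - 1 := by linarith
  obtain ⟨hlb, i1, j1, ha1, hs1⟩ := hlow
  have hσl : 0 < σlow := hs1 ▸ hσpos i1 j1 ha1
  have hsum := stmt15_sum_T a ha01 hsymm B hB L hL φ hφ1 lam hLφ
  have hTform : ∀ i j, φᵀ * (B i j)ᵀ * φ * (φᵀ * B i j * φ)
      = (φᵀ * B i j * φ)ᵀ * (φᵀ * B i j * φ) := by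
    intro i j
    rw [Matrix.transpose_mul, Matrix.transpose_mul, Matrix.transpose_transpose]
    simp only [Matrix.mul_assoc]
  have hq_nonneg : ∀ (i j : Fin N) (x : Fin (N-1) × Fin n → ℝ),
      0 ≤ x ⬝ᵥ ((φᵀ * (B i j)ᵀ * φ * (φᵀ * B i j * φ)) ⊗ₖ
        (1 : Matrix (Fin n) (Fin n) ℝ)) *ᵥ x := by
    intro i j x
    rw [hTform]
    exact stmt15_T_kron_nonneg _ x
  have hΦx : ∀ x : Fin (N-1) × Fin n → ℝ, x ⬝ᵥ Φ *ᵥ x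
      = ∑ i, ∑ j, (k^2 * σ j i^2) *
          (x ⬝ᵥ ((φᵀ * (B i j)ᵀ * φ * (φᵀ * B i j * φ)) ⊗ₖ
            (1 : Matrix (Fin n) (Fin n) ℝ)) *ᵥ x) := by
    intro x
    rw [hΦ, stmt15_qf_sum]
    refine Finset.sum_congr rfl fun i _ => ?_
    rw [stmt15_qf_sum]
    refine Finset.sum_congr rfl fun j _ => ?_
    rw [Matrix.kronecker_smul, stmt15_qf_smul]
  have hQsum : ∀ x : Fin (N-1) × Fin n → ℝ,
      ∑ i, ∑ j, (x ⬝ᵥ ((φᵀ * (B i j)ᵀ * φ * (φᵀ * B i j * φ)) ⊗ₖ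
          (1 : Matrix (Fin n) (Fin n) ℝ)) *ᵥ x)
      = (2 * (1 - (N:ℝ)⁻¹)) *
          (x ⬝ᵥ (Matrix.diagonal lam ⊗ₖ (1 : Matrix (Fin n) (Fin n) ℝ)) *ᵥ x) := by
    intro x
    have hsplit : x ⬝ᵥ ((∑ i, ∑ j, (φᵀ * (B i j)ᵀ * φ * (φᵀ * B i j * φ))) ⊗ₖ
        (1 : Matrix (Fin n) (Fin n) ℝ)) *ᵥ x
        = ∑ i, ∑ j, (x ⬝ᵥ ((φᵀ * (B i j)ᵀ * φ * (φᵀ * B i j * φ)) ⊗ₖ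
            (1 : Matrix (Fin n) (Fin n) ℝ)) *ᵥ x) := by
      rw [stmt15_sum_kronecker, stmt15_qf_sum]
      exact Finset.sum_congr rfl fun i _ => by rw [stmt15_sum_kronecker, stmt15_qf_sum]
    rw [← hsplit, hsum, Matrix.smul_kronecker, stmt15_qf_smul]
  have hT0 : ∀ i j, a i j = 0 → φᵀ * (B i j)ᵀ * φ * (φᵀ * B i j * φ) = 0 := by
    intro i j h
    rw [hB, h]; simp
  have hΦ_lb : ∀ x : Fin (N-1) × Fin n → ℝ,
      (k^2 * σlow^2) * ((2 * (1 - (N:ℝ)⁻¹)) *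
        (x ⬝ᵥ (Matrix.diagonal lam ⊗ₖ (1 : Matrix (Fin n) (Fin n) ℝ)) *ᵥ x))
      ≤ x ⬝ᵥ Φ *ᵥ x := by
    intro x
    rw [hΦx, ← hQsum, Finset.mul_sum]
    refine Finset.sum_le_sum fun i _ => ?_
    rw [Finset.mul_sum]
    refine Finset.sum_le_sum fun j _ => ?_
    rcases ha01 i j with h | h
    · rw [hT0 i j h]
      simp
    · have h1 : σlow ≤ σ j i := hlb i j h
      have hq := hq_nonneg i j x
      have hσ2 : σlow^2 ≤ σ j i ^ 2 := by nlinarith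
      have h2 : k^2 * σlow^2 ≤ k^2 * σ j i ^ 2 :=
        mul_le_mul_of_nonneg_left hσ2 (sq_nonneg k)
      exact mul_le_mul_of_nonneg_right h2 hq
  have hΨx : ∀ x : Fin (N-1) × Fin n → ℝ, x ⬝ᵥ Ψ *ᵥ x
      = 2*k*(x ⬝ᵥ (Matrix.diagonal lam ⊗ₖ (1 : Matrix (Fin n) (Fin n) ℝ)) *ᵥ x)
        - x ⬝ᵥ Φ *ᵥ x := by
    intro x
    rw [hΨ, Matrix.sub_mulVec, dotProduct_sub, Matrix.kronecker_smul, stmt15_qf_smul]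
  have part1 : ∀ x : Fin (N-1) × Fin n → ℝ,
      x ⬝ᵥ Ψ *ᵥ x ≤ (2 * k * (1 - k * σlow ^ 2 * ((N : ℝ) - 1) / N)) *
        (x ⬝ᵥ (Matrix.diagonal lam ⊗ₖ (1 : Matrix (Fin n) (Fin n) ℝ)) *ᵥ x) := by
    intro x
    have h1 := hΦ_lb x
    have hscal : (2 * k * (1 - k * σlow ^ 2 * ((N : ℝ) - 1) / N)) *
        (x ⬝ᵥ (Matrix.diagonal lam ⊗ₖ (1 : Matrix (Fin n) (Fin n) ℝ)) *ᵥ x)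
        = 2*k*(x ⬝ᵥ (Matrix.diagonal lam ⊗ₖ (1 : Matrix (Fin n) (Fin n) ℝ)) *ᵥ x)
          - (k^2 * σlow^2) * ((2 * (1 - (N:ℝ)⁻¹)) *
            (x ⬝ᵥ (Matrix.diagonal lam ⊗ₖ (1 : Matrix (Fin n) (Fin n) ℝ)) *ᵥ x)) := by
      field_simp
    rw [hΨx, hscal]
    linarith
  refine ⟨fun _ x => part1 x, fun hpd => ?_⟩
  have hN1' : 0 < N - 1 := by omega
  set p0 : Fin (N-1) × Fin n := (⟨0, hN1'⟩, ⟨0, by omega⟩) with hp0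
  set e : Fin (N-1) × Fin n → ℝ := Pi.single p0 1 with he
  have he0 : e ≠ 0 := by
    intro h
    have h1 := congrFun h p0
    simp [he, Pi.single_eq_same] at h1
  have hQe : e ⬝ᵥ (Matrix.diagonal lam ⊗ₖ (1 : Matrix (Fin n) (Fin n) ℝ)) *ᵥ e
      = lam p0.1 := by
    rw [he, Matrix.mulVec_single, single_dotProduct]
    simp [Matrix.kroneckerMap_apply, Matrix.diagonal_apply_eq, Matrix.one_apply_eq]
  have hpe : 0 < e ⬝ᵥ Ψ *ᵥ e := by
    have := hpd.dotProduct_mulVec_pos he0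
    simpa [star_trivial] using this
  have hΦe : 0 ≤ e ⬝ᵥ Φ *ᵥ e := by
    rw [hΦx]
    refine Finset.sum_nonneg fun i _ => Finset.sum_nonneg fun j _ => ?_
    exact mul_nonneg (by positivity) (hq_nonneg i j e)
  have h2 := hΨx e
  rw [hQe] at h2
  have hk : 0 < k := by
    by_contra hkn
    push_neg at hkn
    nlinarith [hpos p0.1, mul_nonneg (neg_nonneg.2 hkn) (hpos p0.1).le]
  refine ⟨hk, ?_⟩
  have h3 := part1 e
  rw [hQe] at h3
  have hβ : 0 < 1 - k * σlow ^ 2 * ((N:ℝ) - 1) / N := by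
    by_contra hc
    push_neg at hc
    have h6 : 2 * k * (1 - k * σlow ^ 2 * ((N:ℝ) - 1) / N) ≤ 0 := by nlinarith
    nlinarith [hpos p0.1, mul_nonneg (neg_nonneg.2 h6) (hpos p0.1).le]
  rw [lt_div_iff₀ (by positivity : (0:ℝ) < ((N:ℝ) - 1) * σlow ^ 2)]
  have h4 : k * σlow ^ 2 * ((N:ℝ) - 1) / N < 1 := by linarith
  have h5 : k * σlow ^ 2 * ((N:ℝ) - 1) < N := by
    have := (div_lt_one hNR).mp h4
    linarith
  nlinarith [h5]
end
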